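/- Let 𝒢 be a finite two-player strategic game with move sets M₀, M₁ and utility functions u₀, u₁ : M₀ × M₁ → V for a finite linearly ordered set V, and let Env_𝒢 be its environment encoding. Then 𝒢 has a pure Nash equilibrium if and only if Env_𝒢, Σ^{unif,det}(Env_𝒢) ⊨ ¬D_∅¬(BR₀ ∧ BR₁), i.e., the formula ¬D_∅¬(BR₀ ∧ BR₁) holds at (r,0) for every run r of I(Env_𝒢, Σ^{unif,det}(Env_𝒢)). -/

import Mathlib

/-! Observations in the game encoding are trivial, so a uniform deterministic strategy plays one
fixed move, and the runs of the strategy space are exactly the plays `profileRun a b` of pure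
profiles. On such a run `U_i(v)` holds iff `u_i(a, b) = v`, and the points agreeing with it on
`σ(1 - i)` are the plays in which only player `i` changes move; so `BR_i` holds there iff player
`i`'s move is a best response. Finally `¬D_∅¬φ` does not depend on the point: it says that `φ`
holds at some point of the system. -/

namespace Paper

open Classical

/-- An environment for a set of agents. -/
structure Env (Agent State Obs Act PropV : Type) where
  init : Set State
  acts : Agent → Set Act
  trans : State → (Agent → Act) → State → Prop
  obs : Agent → State → Obs
  val : State → Set PropV
  acts_ne : ∀ i, (acts i).Nonempty
  serial : ∀ s a, (∀ i, a i ∈ acts i) → ∃ t, trans s a t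

variable {Agent State Obs Act PropV Var Gl Idx Loc : Type}

/-- A strategy: a choice of a set of actions at each state. -/
abbrev Strategy (State Act : Type) := State → Set Act

def IsStrategy (E : Env Agent State Obs Act PropV) (i : Agent) (α : Strategy State Act) : Prop :=
  ∀ s, (α s).Nonempty ∧ α s ⊆ E.acts i

def UniformStrat (E : Env Agent State Obs Act PropV) (i : Agent) (α : Strategy State Act) : Prop :=
  ∀ s t, E.obs i s = E.obs i t → α s = α t

def DetStrat (α : Strategy State Act) : Prop := ∀ s, ∃ a, α s = {a}

abbrev JointStrategy (Agent State Act : Type) := Agent → Strategy State Act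

def IsJoint (E : Env Agent State Obs Act PropV) (α : JointStrategy Agent State Act) : Prop :=
  ∀ i, IsStrategy E i (α i)

/-- The set of all locally uniform joint strategies. -/
def SigmaUnif (E : Env Agent State Obs Act PropV) : Set (JointStrategy Agent State Act) :=
  {α | ∀ i, IsStrategy E i (α i) ∧ UniformStrat E i (α i)}

/-- The set of all locally uniform deterministic joint strategies. -/
def SigmaUnifDet (E : Env Agent State Obs Act PropV) : Set (JointStrategy Agent State Act) :=
  {α | ∀ i, IsStrategy E i (α i) ∧ UniformStrat E i (α i) ∧ DetStrat (α i)}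

/-- Indices for the components of a global state in strategy space:
the environment `e`, the basic agents, and the strategic agents `σ(i)`. -/
inductive SIdx (Agent : Type) : Type
  | env : SIdx Agent
  | ag : Agent → SIdx Agent
  | str : Agent → SIdx Agent

/-- Global states in strategy space: a state of the environment together with
a joint strategy. -/
abbrev GState (Agent State Act : Type) := State × JointStrategy Agent State Act

/-- An interpreted system: a set of runs, a local-state function giving the
component of a global state for each index, and a propositional assignment. -/
structure IS (Gl Idx Loc PropV : Type) where
  runs : Set (ℕ → Gl)
  loc : Idx → Gl → Loc
  val : Gl → Set PropV

/-- Equality of the `i`-components of two global states. -/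
def IS.sameLoc (M : IS Gl Idx Loc PropV) (i : Idx) (g g' : Gl) : Prop := M.loc i g = M.loc i g'

/-- Syntax of the extended temporal epistemic logic ETL/ESL. -/
inductive ESL (Idx PropV Var : Type) : Type
  | tt : ESL Idx PropV Var
  | atom (p : PropV) : ESL Idx PropV Var
  | neg (φ : ESL Idx PropV Var) : ESL Idx PropV Var
  | conj (φ ψ : ESL Idx PropV Var) : ESL Idx PropV Var
  | next (φ : ESL Idx PropV Var) : ESL Idx PropV Var
  | until_ (φ ψ : ESL Idx PropV Var) : ESL Idx PropV Var
  | box (φ : ESL Idx PropV Var) : ESL Idx PropV Var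
  | all (φ : ESL Idx PropV Var) : ESL Idx PropV Var
  | exv (x : Var) (φ : ESL Idx PropV Var) : ESL Idx PropV Var
  | leq (i : Idx) (x : Var) : ESL Idx PropV Var
  | dk (G : Set Idx) (φ : ESL Idx PropV Var) : ESL Idx PropV Var
  | ck (G : Set Idx) (φ : ESL Idx PropV Var) : ESL Idx PropV Var

/-- The common-knowledge reachability relation on points: the reflexive-transitive
closure of the union over `i ∈ Grp` of the "same `i`-component" relations. -/
def ckRel (M : IS Gl Idx Loc PropV) (Grp : Set Idx) :
    ((ℕ → Gl) × ℕ) → ((ℕ → Gl) × ℕ) → Prop :=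
  Relation.ReflTransGen (fun p q => q.1 ∈ M.runs ∧ ∃ i ∈ Grp, M.sameLoc i (p.1 p.2) (q.1 q.2))

variable [DecidableEq Var]

/-- Satisfaction of an ESL formula at a point `(r,m)` of an interpreted system,
relative to a context `Γ` interpreting variables as global states. -/
def esat (M : IS Gl Idx Loc PropV) : ESL Idx PropV Var → (Var → Gl) → (ℕ → Gl) → ℕ → Prop
  | .tt, _, _, _ => True
  | .atom p, _, r, m => p ∈ M.val (r m)
  | .neg φ, Γ, r, m => ¬ esat M φ Γ r m
  | .conj φ ψ, Γ, r, m => esat M φ Γ r m ∧ esat M ψ Γ r m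
  | .next φ, Γ, r, m => esat M φ Γ r (m+1)
  | .until_ φ ψ, Γ, r, m =>
      ∃ m', m ≤ m' ∧ esat M ψ Γ r m' ∧ ∀ k, m ≤ k → k < m' → esat M φ Γ r k
  | .box φ, Γ, r, m => ∀ m', m ≤ m' → esat M φ Γ r m'
  | .all φ, Γ, r, m => ∀ r' ∈ M.runs, (∀ k, k ≤ m → r' k = r k) → esat M φ Γ r' m
  | .exv x φ, Γ, r, m => ∃ r' ∈ M.runs, ∃ m' : ℕ, esat M φ (Function.update Γ x (r' m')) r m
  | .leq i x, Γ, r, m => M.sameLoc i (r m) (Γ x)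
  | .dk Grp φ, Γ, r, m =>
      ∀ r' ∈ M.runs, ∀ m', (∀ i ∈ Grp, M.sameLoc i (r' m') (r m)) → esat M φ Γ r' m'
  | .ck Grp φ, Γ, r, m =>
      ∀ r' ∈ M.runs, ∀ m', ckRel M Grp (r, m) (r', m') → esat M φ Γ r' m'

namespace ESL
def ff : ESL Idx PropV Var := .neg .tt
def impf (φ ψ : ESL Idx PropV Var) : ESL Idx PropV Var := .neg (.conj φ (.neg ψ))
def orf (φ ψ : ESL Idx PropV Var) : ESL Idx PropV Var := .neg (.conj (.neg φ) (.neg ψ))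
def iffF (φ ψ : ESL Idx PropV Var) : ESL Idx PropV Var := .conj (impf φ ψ) (impf ψ φ)
def EX (φ : ESL Idx PropV Var) : ESL Idx PropV Var := .neg (.all (.neg (.next φ)))
end ESL

def bigConj (l : List (ESL Idx PropV Var)) : ESL Idx PropV Var := l.foldr .conj .tt
def bigDisj (l : List (ESL Idx PropV Var)) : ESL Idx PropV Var := l.foldr ESL.orf ESL.ff

/-- The local-state function of strategy space: the `e` component is the state,
the `i` component is agent `i`'s observation, and the `σ(i)` component is
agent `i`'s strategy. -/
def sLoc (E : Env Agent State Obs Act PropV) :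
    SIdx Agent → GState Agent State Act → State ⊕ Obs ⊕ Strategy State Act
  | .env, g => Sum.inl g.1
  | .ag i, g => Sum.inr (Sum.inl (E.obs i g.1))
  | .str i, g => Sum.inr (Sum.inr (g.2 i))

/-- The runs of the strategy space `I(Env,Σ)`. -/
def IsRun (E : Env Agent State Obs Act PropV) (Sig : Set (JointStrategy Agent State Act))
    (r : ℕ → GState Agent State Act) : Prop :=
  (r 0).1 ∈ E.init ∧ (r 0).2 ∈ Sig ∧
  ∀ m, (r (m+1)).2 = (r m).2 ∧
    ∃ a, (∀ j, a j ∈ (r m).2 j (r m).1) ∧ E.trans (r m).1 a (r (m+1)).1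

/-- The strategy space interpreted system `I(Env,Σ)`. -/
def stratSpace (E : Env Agent State Obs Act PropV) (Sig : Set (JointStrategy Agent State Act)) :
    IS (GState Agent State Act) (SIdx Agent) (State ⊕ Obs ⊕ Strategy State Act) PropV :=
  { runs := {r | IsRun E Sig r}, loc := sLoc E, val := fun g => E.val g.1 }

/-- `Env[S/I]`: the environment with all states initial. -/
def Env.allInit (E : Env Agent State Obs Act PropV) : Env Agent State Obs Act PropV :=
  { E with init := Set.univ }

end Paper
namespace Paper

variable {M0 M1 V : Type}

/-- Transitions of the game environment: play happens in the first step from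
the initial state `none`, and subsequent transitions do not change the state. -/
def gameTrans : Option (M0 × M1) → (Fin 2 → M0 ⊕ M1) → Option (M0 × M1) → Prop
  | none, a, some p => a 0 = Sum.inl p.1 ∧ a 1 = Sum.inr p.2
  | none, _, none => False
  | some p, _, some q => p = q
  | some _, _, none => False

/-- The environment `Env_𝒢` encoding a two-player strategic game with move sets
`M0`, `M1` and utility functions `u0`, `u1`. The proposition `(i,v)` reads
`u_i = v`. -/
def gameEnv [Nonempty M0] [Nonempty M1] (u0 u1 : M0 → M1 → V) :
    Env (Fin 2) (Option (M0 × M1)) Unit (M0 ⊕ M1) (Fin 2 × V) where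
  init := {none}
  acts := fun i => if i = 0 then Set.range Sum.inl else Set.range Sum.inr
  trans := gameTrans
  obs := fun _ _ => ()
  val := fun s => match s with
    | none => ∅
    | some p => {x | x = (0, u0 p.1 p.2) ∨ x = (1, u1 p.1 p.2)}
  acts_ne := by
    intro i
    by_cases h : i = 0
    · simp only [if_pos h]
      exact Set.range_nonempty _
    · simp only [if_neg h]
      exact Set.range_nonempty _
  serial := by
    intro s a ha
    cases s with
    | some p => exact ⟨some p, rfl⟩
    | none =>
        have h0 := ha 0
        have h1 := ha 1
        simp only [if_pos rfl] at h0
        have : (1 : Fin 2) ≠ 0 := by decide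
        simp only [if_neg this] at h1
        obtain ⟨m0, hm0⟩ := h0
        obtain ⟨m1, hm1⟩ := h1
        exact ⟨some (m0, m1), hm0.symm, hm1.symm⟩

/-- `U_i(v) = X(u_i = v)`. -/
def Uform (i : Fin 2) (v : V) : ESL (SIdx (Fin 2)) (Fin 2 × V) Unit :=
  .next (.atom (i, v))

/-- `BR_i(v)`: `v` is attained by player `i` and, given the adversary's
strategy, is the best attainable utility. -/
noncomputable def BRv [Fintype V] [LinearOrder V] (i : Fin 2) (v : V) :
    ESL (SIdx (Fin 2)) (Fin 2 × V) Unit :=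
  .conj (Uform i v)
    (.dk {SIdx.str (1 - i)}
      (bigConj ((Finset.univ : Finset V).toList.map fun v' =>
        if v' ≤ v then ESL.tt else ESL.neg (Uform i v'))))

/-- `BR_i`: player `i` is playing a best response to the adversary's strategy. -/
noncomputable def BR [Fintype V] [LinearOrder V] (i : Fin 2) :
    ESL (SIdx (Fin 2)) (Fin 2 × V) Unit :=
  bigDisj ((Finset.univ : Finset V).toList.map fun v => BRv i v)

section Satisfaction

variable {Gl Idx Loc PropV Var : Type} [DecidableEq Var] (M : IS Gl Idx Loc PropV)
  (Γ : Var → Gl) (r : ℕ → Gl) (m : ℕ)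

theorem esat_bigConj (l : List (ESL Idx PropV Var)) :
    esat M (bigConj l) Γ r m ↔ ∀ φ ∈ l, esat M φ Γ r m := by
  induction l with
  | nil => exact iff_of_true trivial (by simp)
  | cons φ l ih =>
    show esat M φ Γ r m ∧ esat M (bigConj l) Γ r m ↔ _
    rw [ih, List.forall_mem_cons]

theorem esat_bigDisj (l : List (ESL Idx PropV Var)) :
    esat M (bigDisj l) Γ r m ↔ ∃ φ ∈ l, esat M φ Γ r m := by
  induction l with
  | nil => exact iff_of_false (not_not_intro trivial) (by simp)
  | cons φ l ih =>
    show ¬(¬esat M φ Γ r m ∧ ¬esat M (bigDisj l) Γ r m) ↔ _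
    rw [ih, List.exists_mem_cons_iff, not_and_or, not_not, not_not]

theorem esat_neg_dk_empty_neg (φ : ESL Idx PropV Var) :
    esat M (.neg (.dk ∅ (.neg φ))) Γ r m ↔ ∃ r' ∈ M.runs, ∃ m', esat M φ Γ r' m' := by
  simp [esat]

end Satisfaction

theorem esat_Uform {Gl Loc : Type} (M : IS Gl (SIdx (Fin 2)) Loc (Fin 2 × V)) (i : Fin 2) (v : V)
    (Γ : Unit → Gl) (r : ℕ → Gl) (m : ℕ) :
    esat M (Uform i v) Γ r m ↔ (i, v) ∈ M.val (r (m + 1)) := Iff.rfl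

theorem esat_bigConj_imp_le_iff [Fintype V] [LinearOrder V] {Gl Loc : Type}
    (M : IS Gl (SIdx (Fin 2)) Loc (Fin 2 × V)) (i : Fin 2) (v : V) (Γ : Unit → Gl) (r : ℕ → Gl)
    (m : ℕ) :
    esat M (bigConj ((Finset.univ : Finset V).toList.map fun v' =>
        if v' ≤ v then ESL.tt else ESL.neg (Uform i v'))) Γ r m ↔
      ∀ v', (i, v') ∈ M.val (r (m + 1)) → v' ≤ v := by
  simp only [esat_bigConj, List.forall_mem_map, Finset.mem_toList, Finset.mem_univ, forall_const]
  refine forall_congr' fun v' => ?_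
  split_ifs with h <;> simp [esat, esat_Uform, h]

theorem esat_BR_iff [Fintype V] [LinearOrder V] {Gl Loc : Type}
    (M : IS Gl (SIdx (Fin 2)) Loc (Fin 2 × V)) (i : Fin 2) (Γ : Unit → Gl) (r : ℕ → Gl) (m : ℕ) :
    esat M (BR i) Γ r m ↔ ∃ v, (i, v) ∈ M.val (r (m + 1)) ∧
      ∀ r' ∈ M.runs, ∀ m', M.sameLoc (.str (1 - i)) (r' m') (r m) →
        ∀ v', (i, v') ∈ M.val (r' (m' + 1)) → v' ≤ v := by
  simp only [BR, esat_bigDisj, List.mem_map, Finset.mem_toList,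
    Finset.mem_univ, true_and, exists_exists_eq_and]
  refine exists_congr fun v => and_congr Iff.rfl ?_
  simp only [esat, Set.mem_singleton_iff, forall_eq, esat_bigConj_imp_le_iff]

theorem stratSpace_sameLoc_str_iff {Agent State Obs Act PropV : Type}
    {E : Env Agent State Obs Act PropV} {Sig : Set (JointStrategy Agent State Act)} {i : Agent}
    {g g' : GState Agent State Act} :
    (stratSpace E Sig).sameLoc (.str i) g g' ↔ g.2 i = g'.2 i := by
  simp [IS.sameLoc, stratSpace, sLoc]

theorem stratSpace_val {Agent State Obs Act PropV : Type} (E : Env Agent State Obs Act PropV)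
    (Sig : Set (JointStrategy Agent State Act)) (g : GState Agent State Act) :
    (stratSpace E Sig).val g = E.val g.1 := rfl

section Game

def profileAct (a : M0) (b : M1) : Fin 2 → M0 ⊕ M1 := ![.inl a, .inr b]

def profileStrategy (a : M0) (b : M1) : JointStrategy (Fin 2) (Option (M0 × M1)) (M0 ⊕ M1) :=
  fun i _ => {profileAct a b i}

def profileRun (a : M0) (b : M1) : ℕ → GState (Fin 2) (Option (M0 × M1)) (M0 ⊕ M1)
  | 0 => (none, profileStrategy a b)
  | _ + 1 => (some (a, b), profileStrategy a b)

@[simp]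
theorem profileRun_snd (a : M0) (b : M1) (m : ℕ) : (profileRun a b m).2 = profileStrategy a b := by
  cases m <;> rfl

@[simp]
theorem profileRun_succ (a : M0) (b : M1) (m : ℕ) :
    profileRun a b (m + 1) = (some (a, b), profileStrategy a b) := rfl

theorem gameTrans_none_profileAct {a : M0} {b : M1} {t : Option (M0 × M1)} :
    gameTrans none (profileAct a b) t ↔ t = some (a, b) := by
  rcases t with _ | ⟨a', b'⟩ <;> simp [gameTrans, profileAct, eq_comm]

theorem gameTrans_some {p : M0 × M1} {act : Fin 2 → M0 ⊕ M1} {t : Option (M0 × M1)} :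
    gameTrans (some p) act t ↔ t = some p := by
  rcases t with _ | q <;> simp [gameTrans, eq_comm]

variable [Nonempty M0] [Nonempty M1] {u0 u1 : M0 → M1 → V}

theorem gameEnv_val_some (p : M0 × M1) :
    (gameEnv u0 u1).val (some p) = {x | x = (0, u0 p.1 p.2) ∨ x = (1, u1 p.1 p.2)} := rfl

theorem mem_sigmaUnifDet_gameEnv {α : JointStrategy (Fin 2) (Option (M0 × M1)) (M0 ⊕ M1)} :
    α ∈ SigmaUnifDet (gameEnv u0 u1) ↔ ∃ a b, α = profileStrategy a b := by
  constructor
  · intro hα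
    choose c hc using fun i => (hα i).2.2 none
    have hconst : ∀ i s, α i s = {c i} := fun i s => ((hα i).2.1 s none rfl).trans (hc i)
    have hacts : ∀ i, c i ∈ (gameEnv u0 u1).acts i := fun i => ((hα i).1 none).2 (by simp [hc])
    obtain ⟨a, ha⟩ : c 0 ∈ Set.range Sum.inl := hacts 0
    obtain ⟨b, hb⟩ : c 1 ∈ Set.range Sum.inr := hacts 1
    refine ⟨a, b, funext fun i => funext fun s => ?_⟩
    rw [hconst]
    fin_cases i <;> simp [profileStrategy, profileAct, ha, hb]
  · rintro ⟨a, b, rfl⟩ i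
    refine ⟨fun s => ⟨Set.singleton_nonempty _, ?_⟩, fun _ _ _ => rfl, fun s => ⟨_, rfl⟩⟩
    fin_cases i <;> simp [profileStrategy, profileAct, gameEnv]

theorem stratSpace_gameEnv_runs :
    (stratSpace (gameEnv u0 u1) (SigmaUnifDet (gameEnv u0 u1))).runs =
      Set.range (Function.uncurry profileRun) := by
  ext r
  simp only [Set.mem_range, Prod.exists, Function.uncurry_apply_pair]
  constructor
  · intro hr
    obtain ⟨a, b, hσ⟩ := mem_sigmaUnifDet_gameEnv.mp hr.2.1
    refine ⟨a, b, funext fun m => ?_⟩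
    symm
    induction m with
    | zero => exact Prod.ext hr.1 hσ
    | succ m ih =>
      obtain ⟨hsnd, act, hact, htrans⟩ := hr.2.2 m
      have hact : act = profileAct a b :=
        funext fun j => by simpa [ih, profileStrategy] using hact j
      refine Prod.ext ?_ (by rw [hsnd, ih, profileRun_snd, profileRun_snd])
      rw [ih, hact] at htrans
      cases m <;> simpa [profileRun, gameEnv, gameTrans_none_profileAct, gameTrans_some] using htrans
  · rintro ⟨a, b, rfl⟩
    refine ⟨rfl, mem_sigmaUnifDet_gameEnv.mpr ⟨a, b, rfl⟩,
      fun m => ⟨by simp, profileAct a b, fun j => by simp [profileStrategy], ?_⟩⟩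
    cases m <;> simp [profileRun, gameEnv, gameTrans_none_profileAct, gameTrans_some]

variable [Fintype V] [LinearOrder V] (Γ : Unit → GState (Fin 2) (Option (M0 × M1)) (M0 ⊕ M1))

theorem esat_BR_zero_profileRun (a : M0) (b : M1) (m : ℕ) :
    esat (stratSpace (gameEnv u0 u1) (SigmaUnifDet (gameEnv u0 u1))) (BR 0) Γ (profileRun a b) m ↔
      ∀ a', u0 a' b ≤ u0 a b := by
  rw [esat_BR_iff]
  simp only [stratSpace_gameEnv_runs, Set.forall_mem_range, Prod.forall,
    Function.uncurry_apply_pair]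
  simp [stratSpace_sameLoc_str_iff, stratSpace_val, gameEnv_val_some,
    profileStrategy, profileAct, funext_iff]

theorem esat_BR_one_profileRun (a : M0) (b : M1) (m : ℕ) :
    esat (stratSpace (gameEnv u0 u1) (SigmaUnifDet (gameEnv u0 u1))) (BR 1) Γ (profileRun a b) m ↔
      ∀ b', u1 a b' ≤ u1 a b := by
  rw [esat_BR_iff]
  simp only [stratSpace_gameEnv_runs, Set.forall_mem_range, Prod.forall,
    Function.uncurry_apply_pair, forall_comm (α := M0) (β := M1)]
  simp [stratSpace_sameLoc_str_iff, stratSpace_val, gameEnv_val_some,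
    profileStrategy, profileAct, funext_iff]

end Game

theorem nash_iff_formula_general
    [Nonempty M0] [Nonempty M1]
    [Fintype V] [LinearOrder V]
    (u0 u1 : M0 → M1 → V)
    (Γ : Unit → GState (Fin 2) (Option (M0 × M1)) (M0 ⊕ M1)) :
    (∃ (a : M0) (b : M1),
        (∀ a' : M0, u0 a' b ≤ u0 a b) ∧ (∀ b' : M1, u1 a b' ≤ u1 a b)) ↔
      ∀ r ∈ (stratSpace (gameEnv u0 u1) (SigmaUnifDet (gameEnv u0 u1))).runs,
        esat (stratSpace (gameEnv u0 u1) (SigmaUnifDet (gameEnv u0 u1)))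
          (.neg (.dk (∅ : Set (SIdx (Fin 2))) (.neg (.conj (BR 0) (BR 1))))) Γ r 0 := by
  simp only [esat_neg_dk_empty_neg, stratSpace_gameEnv_runs, Set.forall_mem_range,
    Set.exists_range_iff, Prod.exists, Function.uncurry_apply_pair]
  simp [esat, esat_BR_zero_profileRun, esat_BR_one_profileRun]

/-- a finite two-player strategic game has a pure Nash
equilibrium iff `Env_𝒢, Σ^{unif,det}(Env_𝒢) ⊨ ¬D_∅¬(BR₀ ∧ BR₁)`. -/
theorem nash_iff_formula
    [Fintype M0] [Fintype M1] [Nonempty M0] [Nonempty M1]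
    [Fintype V] [LinearOrder V]
    (u0 u1 : M0 → M1 → V)
    (Γ : Unit → GState (Fin 2) (Option (M0 × M1)) (M0 ⊕ M1)) :
    (∃ (a : M0) (b : M1),
        (∀ a' : M0, u0 a' b ≤ u0 a b) ∧ (∀ b' : M1, u1 a b' ≤ u1 a b)) ↔
      ∀ r ∈ (stratSpace (gameEnv u0 u1) (SigmaUnifDet (gameEnv u0 u1))).runs,
        esat (stratSpace (gameEnv u0 u1) (SigmaUnifDet (gameEnv u0 u1)))
          (.neg (.dk (∅ : Set (SIdx (Fin 2))) (.neg (.conj (BR 0) (BR 1))))) Γ r 0 :=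
  nash_iff_formula_general u0 u1 Γ

end Paper
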